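/- arXiv:1310.6413 — 2 statements merged into one kernel-verified Lean document; each statement's English description precedes it below -/
import Mathlib

section
/- In a family of n disks in the plane such that no disk contains another, if some point of the plane is covered by d of the disks and lies on the boundary circle of one disk D, then the circle bounding D intersects the boundary circles of at least d − 1 other disks in the family. -/
/-!
If a point lies in two closed disks `closedBall a r` and `closedBall b s`, neither containing the
other, then `t = dist a b` satisfies `|r - s| < t ≤ r + s`. In the plane two circles in this
position meet: along the circle around `a`, from the point nearest to `b` to the farthest one, the
distance to `b` runs continuously from `|r - t|` to `r + t`, so it takes the value `s`. Applying
this to the given disk and each of the other disks covering the point gives the `d - 1`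
intersections.
-/

open Metric

section SphereIntersection

variable {E : Type*} [NormedAddCommGroup E] [NormedSpace ℝ E]

lemma exists_norm_eq_one_and_eq_norm_smul [Nontrivial E] (v : E) :
    ∃ u : E, ‖u‖ = 1 ∧ v = ‖v‖ • u := by
  rcases eq_or_ne v 0 with rfl | hv
  · obtain ⟨u, hu⟩ := exists_norm_eq E zero_le_one
    exact ⟨u, hu, by simp⟩
  · refine ⟨‖v‖⁻¹ • v, norm_smul_inv_norm hv, ?_⟩
    rw [smul_smul, mul_inv_cancel₀ (norm_ne_zero_iff.mpr hv), one_smul]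

theorem sphere_inter_sphere_nonempty (hE : 1 < Module.rank ℝ E) {a b : E} {r s : ℝ}
    (hlo : |r - s| ≤ dist a b) (hhi : dist a b ≤ r + s) :
    (sphere a r ∩ sphere b s).Nonempty := by
  have : Nontrivial E := rank_pos_iff_nontrivial.mp (zero_lt_one.trans hE)
  obtain ⟨hrs, hsr⟩ := abs_sub_le_iff.mp hlo
  have hr : 0 ≤ r := by linarith
  obtain ⟨u, hu, hab⟩ := exists_norm_eq_one_and_eq_norm_smul (a - b)
  rw [← dist_eq_norm] at hab
  have hnear : dist (a - r • u) b = |r - dist a b| := by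
    rw [dist_eq_norm, show a - r • u - b = (dist a b - r) • u by rw [sub_smul, ← hab]; abel,
      norm_smul, hu, mul_one, Real.norm_eq_abs, abs_sub_comm]
  have hfar : dist (a + r • u) b = r + dist a b := by
    rw [dist_eq_norm, show a + r • u - b = (r + dist a b) • u by rw [add_smul, ← hab]; abel,
      norm_smul, hu, mul_one, Real.norm_eq_abs, abs_of_nonneg (by positivity)]
  have hdist_a (c : ℝ) : dist (a + c • u) a = |c| := by
    rw [dist_eq_norm, add_sub_cancel_left, norm_smul, hu, mul_one, Real.norm_eq_abs]
  have hnear_mem : a - r • u ∈ sphere a r := by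
    rw [mem_sphere, sub_eq_add_neg, ← neg_smul, hdist_a, abs_neg, abs_of_nonneg hr]
  have hfar_mem : a + r • u ∈ sphere a r := by
    rw [mem_sphere, hdist_a, abs_of_nonneg hr]
  have hs : s ∈ Set.Icc (dist (a - r • u) b) (dist (a + r • u) b) := by
    rw [hnear, hfar]
    exact ⟨abs_le.mpr ⟨by linarith, by linarith⟩, by linarith⟩
  obtain ⟨x, hx, hxb⟩ := (isPreconnected_sphere hE a r).intermediate_value hnear_mem hfar_mem
    (continuous_id.dist continuous_const).continuousOn hs
  exact ⟨x, hx, hxb⟩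

theorem sphere_inter_sphere_nonempty_of_not_subset (hE : 1 < Module.rank ℝ E) {a b : E}
    {r s : ℝ} (hab : (closedBall a r ∩ closedBall b s).Nonempty)
    (hab_not_subset : ¬ closedBall a r ⊆ closedBall b s)
    (hba_not_subset : ¬ closedBall b s ⊆ closedBall a r) :
    (sphere a r ∩ sphere b s).Nonempty := by
  refine sphere_inter_sphere_nonempty hE (abs_sub_le_iff.mpr ⟨?_, ?_⟩)
    (dist_le_add_of_nonempty_closedBall_inter_closedBall hab)
  · by_contra! h
    exact hba_not_subset (closedBall_subset_closedBall' (by rw [dist_comm]; linarith))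
  · by_contra! h
    exact hab_not_subset (closedBall_subset_closedBall' (by linarith))

end SphereIntersection

lemma one_lt_rank_euclideanSpace_fin_two : 1 < Module.rank ℝ (EuclideanSpace ℝ (Fin 2)) :=
  Module.lt_rank_of_lt_finrank (by simp)

theorem deep_point_forces_intersections_general (n d : ℕ)
    (center : Fin n → EuclideanSpace ℝ (Fin 2)) (rad : Fin n → ℝ)
    (hnc : ∀ i j : Fin n, i ≠ j →
      ¬ Metric.closedBall (center i) (rad i) ⊆ Metric.closedBall (center j) (rad j))
    (z : EuclideanSpace ℝ (Fin 2)) (i₀ : Fin n)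
    (hz : z ∈ Metric.sphere (center i₀) (rad i₀))
    (S : Finset (Fin n)) (hS : S.card = d)
    (hcov : ∀ i ∈ S, z ∈ Metric.closedBall (center i) (rad i)) :
    d - 1 ≤ {j : Fin n | j ≠ i₀ ∧
      (Metric.sphere (center j) (rad j) ∩ Metric.sphere (center i₀) (rad i₀)).Nonempty}.ncard := by
  classical
  have hsub : ↑(S.erase i₀) ⊆ {j : Fin n | j ≠ i₀ ∧
      (sphere (center j) (rad j) ∩ sphere (center i₀) (rad i₀)).Nonempty} := by
    intro j hj
    obtain ⟨hji₀, hjS⟩ := Finset.mem_erase.mp hj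
    exact ⟨hji₀, sphere_inter_sphere_nonempty_of_not_subset one_lt_rank_euclideanSpace_fin_two
      ⟨z, hcov j hjS, sphere_subset_closedBall hz⟩ (hnc j i₀ hji₀) (hnc i₀ j hji₀.symm)⟩
  calc d - 1 ≤ (S.erase i₀).card := hS ▸ Finset.pred_card_le_card_erase
    _ = (↑(S.erase i₀) : Set (Fin n)).ncard := (Set.ncard_coe_finset _).symm
    _ ≤ _ := Set.ncard_le_ncard hsub

theorem deep_point_forces_intersections (n d : ℕ)
    (center : Fin n → EuclideanSpace ℝ (Fin 2)) (rad : Fin n → ℝ)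
    (hrad : ∀ i, 0 < rad i)
    (hnc : ∀ i j : Fin n, i ≠ j →
      ¬ Metric.closedBall (center i) (rad i) ⊆ Metric.closedBall (center j) (rad j))
    (z : EuclideanSpace ℝ (Fin 2)) (i₀ : Fin n)
    (hz : z ∈ Metric.sphere (center i₀) (rad i₀))
    (S : Finset (Fin n)) (hS : S.card = d)
    (hcov : ∀ i ∈ S, z ∈ Metric.closedBall (center i) (rad i)) :
    d - 1 ≤ {j : Fin n | j ≠ i₀ ∧
      (Metric.sphere (center j) (rad j) ∩ Metric.sphere (center i₀) (rad i₀)).Nonempty}.ncard :=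
  deep_point_forces_intersections_general n d center rad hnc z i₀ hz S hS hcov
end

section
/- Let D₁ and D₂ be two distinct closed disks in the plane, neither containing the other, whose boundary circles pass through two common points q and r. If each disk's interior contains no point of a finite set P, and q, r ∈ P, then every closed disk whose boundary passes through q and r and which lies 'between' D₁ and D₂ (in the family of circles through q and r) has interior disjoint from P. -/
/-- The squared distance in `EuclideanSpace ℝ (Fin 2)` in coordinates. -/
lemma dist_sq_coords (x y : EuclideanSpace ℝ (Fin 2)) :
    dist x y ^ 2 = (x 0 - y 0)^2 + (x 1 - y 1)^2 := by
  rw [EuclideanSpace.dist_eq, Real.sq_sqrt (by positivity)]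
  simp [Fin.sum_univ_two, Real.dist_eq, sq_abs]

lemma sq_of_dist {x y : EuclideanSpace ℝ (Fin 2)} {t : ℝ} (h : dist x y = t) :
    (x 0 - y 0)^2 + (x 1 - y 1)^2 = t^2 := by
  rw [← dist_sq_coords, h]

/-- If a point of the interior of the pencil disk lies on the first bounding circle,
it must lie inside the second closed disk (push it slightly outward otherwise). -/
lemma push_out {c c₁ c₂ : EuclideanSpace ℝ (Fin 2)} {ρ r₁ r₂ : ℝ} (hr₁ : 0 < r₁)
    (hsub : Metric.closedBall c ρ ⊆ Metric.closedBall c₁ r₁ ∪ Metric.closedBall c₂ r₂)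
    {x : EuclideanSpace ℝ (Fin 2)} (hx : dist x c < ρ) (h1 : dist x c₁ = r₁) :
    dist x c₂ ≤ r₂ := by
  by_contra hgt
  push_neg at hgt
  set δ := min (dist x c₂ - r₂) (ρ - dist x c) with hδ
  have hδpos : 0 < δ := lt_min (by linarith) (by linarith)
  set ε := δ / (2 * r₁) with hε
  have hεpos : 0 < ε := by positivity
  set x' := x + ε • (x - c₁) with hx'
  have hxc1 : ‖x - c₁‖ = r₁ := by rw [← dist_eq_norm]; exact h1
  have hd1 : dist x' c₁ = (1 + ε) * r₁ := by
    have h : x' - c₁ = (1 + ε) • (x - c₁) := by rw [hx']; module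
    rw [dist_eq_norm, h, norm_smul, hxc1, Real.norm_eq_abs, abs_of_pos (by linarith)]
  have hdx : dist x' x = δ / 2 := by
    have h : x' - x = ε • (x - c₁) := by rw [hx']; module
    rw [dist_eq_norm, h, norm_smul, hxc1, Real.norm_eq_abs, abs_of_pos hεpos, hε]
    field_simp
  have hmem : x' ∈ Metric.closedBall c ρ := by
    have : dist x' c ≤ dist x' x + dist x c := dist_triangle _ _ _
    have h2 : δ ≤ ρ - dist x c := min_le_right _ _
    exact Metric.mem_closedBall.mpr (by linarith)
  rcases hsub hmem with h | h
  · rw [Metric.mem_closedBall] at h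
    nlinarith
  · rw [Metric.mem_closedBall] at h
    have : dist x c₂ ≤ dist x x' + dist x' c₂ := dist_triangle _ _ _
    rw [dist_comm x x'] at this
    have h2 : δ ≤ dist x c₂ - r₂ := min_le_left _ _
    linarith

/-- A point on both circles of a pencil that lies strictly inside a third circle of the
pencil through `q` and `r` gives a contradiction. -/
lemma pencil_key (c₁ c₂ q r x c : EuclideanSpace ℝ (Fin 2)) (r₁ r₂ ρ : ℝ)
    (hcc : c₁ ≠ c₂) (hqr : q ≠ r)
    (E1 : dist x c₁ = r₁) (E2 : dist x c₂ = r₂)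
    (E3 : dist q c₁ = r₁) (E4 : dist q c₂ = r₂)
    (E5 : dist r c₁ = r₁) (E6 : dist r c₂ = r₂)
    (E7 : dist q c = ρ) (E8 : dist r c = ρ)
    (hxc : dist x c < ρ) : False := by
  have e1 := sq_of_dist E1
  have e2 := sq_of_dist E2
  have e3 := sq_of_dist E3
  have e4 := sq_of_dist E4
  have e5 := sq_of_dist E5
  have e6 := sq_of_dist E6
  have e7 := sq_of_dist E7
  have e8 := sq_of_dist E8
  -- x and r lie on the radical line through q
  have L1 : (x 0 - q 0)*(c₂ 0 - c₁ 0) + (x 1 - q 1)*(c₂ 1 - c₁ 1) = 0 := by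
    linear_combination (e1 - e2 - e3 + e4)/2
  have L2 : (r 0 - q 0)*(c₂ 0 - c₁ 0) + (r 1 - q 1)*(c₂ 1 - c₁ 1) = 0 := by
    linear_combination (e5 - e6 - e3 + e4)/2
  have hv : c₂ 0 - c₁ 0 ≠ 0 ∨ c₂ 1 - c₁ 1 ≠ 0 := by
    by_contra h
    push_neg at h
    exact hcc (by ext i; fin_cases i <;> simp <;> linarith [h.1, h.2])
  have hw : r 0 - q 0 ≠ 0 ∨ r 1 - q 1 ≠ 0 := by
    by_contra h
    push_neg at h
    exact hqr (by ext i; fin_cases i <;> simp <;> linarith [h.1, h.2])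
  have hdet : (x 0 - q 0)*(r 1 - q 1) - (x 1 - q 1)*(r 0 - q 0) = 0 := by
    rcases hv with hv0 | hv1
    · have hd0 : ((x 0 - q 0)*(r 1 - q 1) - (x 1 - q 1)*(r 0 - q 0)) * (c₂ 0 - c₁ 0) = 0 := by
        linear_combination (r 1 - q 1) * L1 - (x 1 - q 1) * L2
      exact (mul_eq_zero.mp hd0).resolve_right hv0
    · have hd1 : ((x 0 - q 0)*(r 1 - q 1) - (x 1 - q 1)*(r 0 - q 0)) * (c₂ 1 - c₁ 1) = 0 := by
        linear_combination (x 0 - q 0) * L2 - (r 0 - q 0) * L1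
      exact (mul_eq_zero.mp hd1).resolve_right hv1
  obtain ⟨s, hs0, hs1⟩ : ∃ s, x 0 - q 0 = s * (r 0 - q 0) ∧ x 1 - q 1 = s * (r 1 - q 1) := by
    rcases hw with hw0 | hw1
    · refine ⟨(x 0 - q 0)/(r 0 - q 0), by field_simp, ?_⟩
      field_simp
      linear_combination -(hdet)
    · refine ⟨(x 1 - q 1)/(r 1 - q 1), ?_, by field_simp⟩
      field_simp
      linear_combination hdet
  have hgoal : dist x c ^ 2 = ρ ^ 2 := by
    rw [dist_sq_coords]
    linear_combination e1 + s * e8 + (1 - s) * e7 - s * e5 + (s - 1) * e3 +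
      2 * (c₁ 0 - c 0) * hs0 + 2 * (c₁ 1 - c 1) * hs1
  exact absurd hgoal (ne_of_lt (pow_lt_pow_left₀ hxc dist_nonneg two_ne_zero))

theorem pencil_disks_empty (P : Set (EuclideanSpace ℝ (Fin 2))) (hP : P.Finite)
    (c₁ c₂ q r : EuclideanSpace ℝ (Fin 2)) (r₁ r₂ : ℝ)
    (hr₁ : 0 < r₁) (hr₂ : 0 < r₂)
    (hne : Metric.closedBall c₁ r₁ ≠ Metric.closedBall c₂ r₂)
    (hnc₁ : ¬ Metric.closedBall c₁ r₁ ⊆ Metric.closedBall c₂ r₂)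
    (hnc₂ : ¬ Metric.closedBall c₂ r₂ ⊆ Metric.closedBall c₁ r₁)
    (hqr : q ≠ r)
    (hq : q ∈ Metric.sphere c₁ r₁ ∩ Metric.sphere c₂ r₂)
    (hr : r ∈ Metric.sphere c₁ r₁ ∩ Metric.sphere c₂ r₂)
    (hemp₁ : ∀ x ∈ P, x ∉ Metric.ball c₁ r₁)
    (hemp₂ : ∀ x ∈ P, x ∉ Metric.ball c₂ r₂)
    (hqP : q ∈ P) (hrP : r ∈ P) :
    ∀ (c : EuclideanSpace ℝ (Fin 2)) (ρ : ℝ), 0 < ρ →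
      q ∈ Metric.sphere c ρ → r ∈ Metric.sphere c ρ →
      Metric.closedBall c ρ ⊆ Metric.closedBall c₁ r₁ ∪ Metric.closedBall c₂ r₂ →
      ∀ x ∈ P, x ∉ Metric.ball c ρ := by
  intro c ρ hρ hqs hrs hsub x hxP hxball
  have hxc : dist x c < ρ := Metric.mem_ball.mp hxball
  have hxu : x ∈ Metric.closedBall c₁ r₁ ∪ Metric.closedBall c₂ r₂ :=
    hsub (Metric.ball_subset_closedBall hxball)
  have hx12 : dist x c₁ = r₁ ∧ dist x c₂ = r₂ := by
    rcases hxu with h | h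
    · have e1 : dist x c₁ = r₁ :=
        le_antisymm (Metric.mem_closedBall.mp h)
          (not_lt.mp fun hlt => hemp₁ x hxP (Metric.mem_ball.mpr hlt))
      exact ⟨e1, le_antisymm (push_out hr₁ hsub hxc e1)
        (not_lt.mp fun hlt => hemp₂ x hxP (Metric.mem_ball.mpr hlt))⟩
    · have e2 : dist x c₂ = r₂ :=
        le_antisymm (Metric.mem_closedBall.mp h)
          (not_lt.mp fun hlt => hemp₂ x hxP (Metric.mem_ball.mpr hlt))
      have hsub' : Metric.closedBall c ρ ⊆ Metric.closedBall c₂ r₂ ∪ Metric.closedBall c₁ r₁ := by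
        rwa [Set.union_comm]
      exact ⟨le_antisymm (push_out hr₂ hsub' hxc e2)
        (not_lt.mp fun hlt => hemp₁ x hxP (Metric.mem_ball.mpr hlt)), e2⟩
  have hcc : c₁ ≠ c₂ := by
    rintro rfl
    have h1 : dist q c₁ = r₁ := Metric.mem_sphere.mp hq.1
    have h2 : dist q c₁ = r₂ := Metric.mem_sphere.mp hq.2
    exact hne (by rw [← h1, h2])
  exact pencil_key c₁ c₂ q r x c r₁ r₂ ρ hcc hqr hx12.1 hx12.2
    (Metric.mem_sphere.mp hq.1) (Metric.mem_sphere.mp hq.2)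
    (Metric.mem_sphere.mp hr.1) (Metric.mem_sphere.mp hr.2)
    (Metric.mem_sphere.mp hqs) (Metric.mem_sphere.mp hrs) hxc
end
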